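/- Let G be a noncompact locally compact group, H a closed co-compact subgroup of G, and ρ an H-periodic pseudodistance on G (i.e. ρ is locally bounded, proper, asymptotically geodesic, and ρ(hx,hy) = ρ(x,y) for all h ∈ H, x,y ∈ G). Let V be a finite-dimensional real normed vector space and π₁ : G → V a continuous group homomorphism into the additive group of V. Define E to be the closed convex hull of {π₁(h)/ρ(e,h) : h ∈ H, ρ(e,h) > 0}, and for s > 0 define E_s to be the closed convex hull of {π₁(x)/ρ(e,x) : x ∈ G, ρ(e,x) > s}. Then E = ⋂_{s>0} E_s. -/

import Mathlib

/-!
If `h ∈ H` has a power `h ^ n` with `ρ(e, h ^ n) > s`, then `ρ(e, h ^ n) ≤ n ρ(e, h)` makes the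
slope `π₁(h) / ρ(e, h)` a convex combination of `0` and the slope of `h ^ n`; if it has none, the
linear growth `‖π₁ x‖ ≤ A ρ(e, x) + B` forces `π₁ h = 0`. Since `0` is the midpoint of the slopes
of `h` and `h⁻¹`, this gives `E ⊆ E_s`.

Conversely, join `e` to a far point `x` by a `(1 + η)`-quasi-geodesic chain, coarsen it to about
`ρ(e, x) / S` steps of length at most `2 S`, and move each chain point into `H` at cost `C` by
co-compactness. The increments `g` of the moved chain lie in `H`, their `π₁`-values add up to
`π₁(x)` up to a bounded error, and their total length is `(1 + O(η)) ρ(e, x)` once `S` is large.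
Hence the slope of `x` is within `O(η)` of a sub-convex combination of `H`-slopes, which are
bounded because `‖π₁ h‖ ≤ A ρ(e, h)` on `H`; so `⋂ E_s ⊆ E`.
-/

open MeasureTheory Filter Topology Pointwise

/-- `ρ` is a pseudodistance: nonnegative, symmetric, and satisfies the triangle inequality. -/
def IsPseudoDist {G : Type*} [Group G] (ρ : G → G → ℝ) : Prop :=
  (∀ x y : G, 0 ≤ ρ x y) ∧ (∀ x y : G, ρ x y = ρ y x) ∧
    ∀ x y z : G, ρ x z ≤ ρ x y + ρ y z

/-- `ρ` is locally bounded: it maps compact subsets of `G × G` to bounded sets of reals. -/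
def IsLocallyBoundedDist {G : Type*} [Group G] [TopologicalSpace G] (ρ : G → G → ℝ) : Prop :=
  ∀ K : Set (G × G), IsCompact K → ∃ M : ℝ, ∀ p ∈ K, ρ p.1 p.2 ≤ M

/-- `ρ` is proper: balls around the identity are relatively compact. -/
def IsProperDist {G : Type*} [Group G] [TopologicalSpace G] (ρ : G → G → ℝ) : Prop :=
  ∀ t : ℝ, 0 < t → IsCompact (closure {y : G | ρ 1 y ≤ t})

/-- `ρ` is asymptotically geodesic: for every `ε > 0` there is `s > 0` such that any two points
can be joined by a chain of points with consecutive distances at most `s` and total length at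
most `(1 + ε)` times the distance. -/
def IsAsympGeodesic {G : Type*} [Group G] (ρ : G → G → ℝ) : Prop :=
  ∀ ε : ℝ, 0 < ε → ∃ s : ℝ, 0 < s ∧ ∀ x y : G, ∃ n : ℕ, ∃ c : ℕ → G,
    c 0 = x ∧ c n = y ∧ (∀ i < n, ρ (c i) (c (i + 1)) ≤ s) ∧
    ∑ i ∈ Finset.range n, ρ (c i) (c (i + 1)) ≤ (1 + ε) * ρ x y

/-- A closed subgroup `H` of `G` is co-compact if `H · F = G` for some compact `F ⊆ G`. -/
def IsCocompactSubgroup {G : Type*} [Group G] [TopologicalSpace G] (H : Subgroup G) : Prop :=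
  IsClosed (H : Set G) ∧ ∃ F : Set G, IsCompact F ∧ (H : Set G) * F = Set.univ

/-- A periodic pseudodistance on `G`: a locally bounded, proper, asymptotically geodesic
pseudodistance which is invariant under left translations by some closed co-compact subgroup. -/
def IsPeriodicPseudoDist {G : Type*} [Group G] [TopologicalSpace G] (ρ : G → G → ℝ) : Prop :=
  IsPseudoDist ρ ∧ IsLocallyBoundedDist ρ ∧ IsProperDist ρ ∧ IsAsympGeodesic ρ ∧
    ∃ H : Subgroup G, IsCocompactSubgroup H ∧ ∀ h ∈ H, ∀ x y : G, ρ (h * x) (h * y) = ρ x y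

open Metric

namespace IsPseudoDist

variable {G : Type*} [Group G] {ρ : G → G → ℝ}

theorem nonneg (hρ : IsPseudoDist ρ) (x y : G) : 0 ≤ ρ x y := hρ.1 x y

theorem symm (hρ : IsPseudoDist ρ) (x y : G) : ρ x y = ρ y x := hρ.2.1 x y

theorem triangle (hρ : IsPseudoDist ρ) (x y z : G) : ρ x z ≤ ρ x y + ρ y z := hρ.2.2 x y z

theorem le_add_sum_Ico_add (hρ : IsPseudoDist ρ) (c : ℕ → G) {a b : ℕ} (hab : a ≤ b) (y z : G) :
    ρ y z ≤ ρ y (c a) + ∑ i ∈ Finset.Ico a b, ρ (c i) (c (i + 1)) + ρ (c b) z := by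
  induction b, hab using Nat.le_induction with
  | base => simpa using hρ.triangle y (c a) z
  | succ b hab ih =>
    rw [Finset.sum_Ico_succ_top hab]
    linarith [hρ.triangle (c b) (c (b + 1)) z]

end IsPseudoDist

theorem le_of_forall_nat_mul_le_mul_add {a b c : ℝ} (h : ∀ n : ℕ, 0 < n → n * a ≤ n * c + b) :
    a ≤ c := by
  by_contra! hca
  obtain ⟨n, hn⟩ := exists_nat_gt (max (b / (a - c)) 0)
  have hn0 : 0 < n := by exact_mod_cast (le_max_right _ _).trans_lt hn
  have hb : b < n * (a - c) := (div_lt_iff₀ (sub_pos.2 hca)).1 ((le_max_left _ _).trans_lt hn)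
  linarith [h n hn0]

theorem exists_coarse_subdivision (P : ℕ → ℝ) {n : ℕ} {S : ℝ} (hS : 0 < S) (hP0 : P 0 = 0)
    (hP : ∀ j, 0 ≤ P j) (hstep : ∀ j < n, P (j + 1) ≤ P j + S) :
    ∃ (m : ℕ) (φ : ℕ → ℕ), Monotone φ ∧ φ 0 = 0 ∧ φ m = n ∧
      (∀ k, P (φ (k + 1)) ≤ P (φ k) + 2 * S) ∧ m * S ≤ P n + S := by
  classical
  -- `φ k` is the last index at which `P` is still below `k * S`
  set φ : ℕ → ℕ := fun k => Nat.findGreatest (fun j => P j < k * S) n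
  have hφn : ∀ k, φ k ≤ n := fun k => Nat.findGreatest_le n
  have hφ : Monotone φ := fun k l hkl =>
    Nat.findGreatest_mono_left (fun j hj => hj.trans_le (by gcongr)) n
  refine ⟨⌊P n / S⌋₊ + 1, φ, hφ, ?_, ?_, fun k => ?_, ?_⟩
  · exact Nat.findGreatest_eq_zero_iff.2 fun j _ _ => by simpa using hP j
  · apply Nat.findGreatest_eq
    have := Nat.lt_floor_add_one (P n / S)
    push_cast
    rwa [div_lt_iff₀ hS] at this
  · rcases (hφn k).lt_or_eq with hlt | heq
    · have hbelow : P (φ (k + 1)) < (k + 1 : ℕ) * S :=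
        Nat.findGreatest_spec (P := fun j => P j < (k + 1 : ℕ) * S) (Nat.zero_le n)
          (by rw [hP0]; positivity)
      have habove : ¬P (φ k + 1) < k * S := Nat.findGreatest_is_greatest (Nat.lt_succ_self _) hlt
      push_cast at hbelow
      linarith [hstep (φ k) hlt]
    · rw [le_antisymm (heq ▸ hφn (k + 1)) (hφ k.le_succ)]
      linarith
  · have := Nat.floor_le (div_nonneg (hP n) hS.le)
    rw [le_div_iff₀ hS] at this
    push_cast
    linarith

section Hom

variable {G : Type*} [Group G] {V : Type*} [AddGroup V] {π₁ : G → V}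

theorem map_one_of_map_mul (hhom : ∀ x y : G, π₁ (x * y) = π₁ x + π₁ y) : π₁ 1 = 0 := by
  simpa using hhom 1 1

theorem map_inv_of_map_mul (hhom : ∀ x y : G, π₁ (x * y) = π₁ x + π₁ y) (a : G) :
    π₁ a⁻¹ = -π₁ a :=
  eq_neg_of_add_eq_zero_left (by rw [← hhom, inv_mul_cancel, map_one_of_map_mul hhom])

theorem map_pow_of_map_mul (hhom : ∀ x y : G, π₁ (x * y) = π₁ x + π₁ y) (a : G) (n : ℕ) :
    π₁ (a ^ n) = n • π₁ a := by
  induction n with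
  | zero => simp [map_one_of_map_mul hhom]
  | succ n ih => rw [pow_succ, hhom, ih, succ_nsmul]

end Hom

section Convex

variable {V : Type*} [NormedAddCommGroup V] [NormedSpace ℝ V]

theorem zero_mem_convexHull_of_mem_of_neg_mem {s : Set V} {v : V} (hv : v ∈ s) (hnv : -v ∈ s) :
    (0 : V) ∈ convexHull ℝ s := by
  simpa using convex_convexHull ℝ s (subset_convexHull ℝ s hv) (subset_convexHull ℝ s hnv)
    (by norm_num : (0 : ℝ) ≤ 1 / 2) (by norm_num : (0 : ℝ) ≤ 1 / 2) (by norm_num)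

/-- Writing `∑ y i = Λ • p` with `p` the centre of mass of the points `(r i)⁻¹ • y i`, the point
`min Λ 1 • p` lies in `C` and is at distance `(Λ - 1)⁺ * ‖p‖` from the sum. -/
theorem Convex.exists_mem_norm_sum_sub_le {ι : Type*} {C : Set V} (hC : Convex ℝ C)
    (h0 : (0 : V) ∈ C) {t : Finset ι} {r : ι → ℝ} {y : ι → V} {A δ : ℝ} (hA : 0 ≤ A)
    (hδ : 0 ≤ δ) (hr : ∀ i ∈ t, 0 ≤ r i) (hy : ∀ i ∈ t, ‖y i‖ ≤ A * r i)
    (hyC : ∀ i ∈ t, 0 < r i → (r i)⁻¹ • y i ∈ C) (hsum : ∑ i ∈ t, r i ≤ 1 + δ) :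
    ∃ q ∈ C, ‖∑ i ∈ t, y i - q‖ ≤ δ * A := by
  set Λ := ∑ i ∈ t, r i
  have hy0 : ∀ i ∈ t, r i = 0 → y i = 0 := fun i hi hri =>
    norm_le_zero_iff.1 (by simpa [hri] using hy i hi)
  have hry : ∀ i ∈ t, r i • (r i)⁻¹ • y i = y i := by
    intro i hi
    rcases (hr i hi).lt_or_eq with hpos | hzero
    · exact smul_inv_smul₀ hpos.ne' _
    · simp [hy0 i hi hzero.symm]
  rcases (Finset.sum_nonneg hr).lt_or_eq with hΛ | hΛ
  · set p := t.centerMass r fun i => (r i)⁻¹ • y i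
    have hp : p ∈ C ∩ closedBall 0 A := by
      refine (hC.inter (convex_closedBall 0 A)).centerMass_mem hr hΛ fun i hi => ⟨?_, ?_⟩
      · rcases (hr i hi).lt_or_eq with hpos | hzero
        · exact hyC i hi hpos
        · simpa [← hzero] using h0
      · rw [mem_closedBall_zero_iff, norm_smul, norm_inv, Real.norm_of_nonneg (hr i hi)]
        rcases (hr i hi).lt_or_eq with hpos | hzero
        · rw [inv_mul_le_iff₀ hpos, mul_comm]; exact hy i hi
        · simp [← hzero, hA]
    have hsum_eq : ∑ i ∈ t, y i = Λ • p := by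
      rw [show p = Λ⁻¹ • ∑ i ∈ t, r i • (r i)⁻¹ • y i from rfl, smul_inv_smul₀ hΛ.ne']
      exact (Finset.sum_congr rfl hry).symm
    refine ⟨min Λ 1 • p, hC.smul_mem_of_zero_mem h0 hp.1 ⟨by positivity, min_le_right _ _⟩, ?_⟩
    rw [hsum_eq, ← sub_smul, norm_smul, Real.norm_of_nonneg (sub_nonneg.2 (min_le_left _ _))]
    have hp_norm : ‖p‖ ≤ A := mem_closedBall_zero_iff.1 hp.2
    have hexcess : Λ - min Λ 1 ≤ δ := by
      rcases le_total Λ 1 with h | h <;> simp [h] <;> linarith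
    exact mul_le_mul hexcess hp_norm (norm_nonneg _) hδ
  · refine ⟨0, h0, ?_⟩
    have hzero : ∀ i ∈ t, r i = 0 := (Finset.sum_eq_zero_iff_of_nonneg hr).1 hΛ.symm
    rw [Finset.sum_eq_zero fun i hi => hy0 i hi (hzero i hi), zero_sub, norm_neg, norm_zero]
    exact mul_nonneg hδ hA

theorem iInter_closure_convexHull_subset {E : Set V} {T : ℝ → Set V}
    (hT : ∀ δ > 0, ∃ s > 0, T s ⊆ cthickening δ (convexHull ℝ E)) :
    ⋂ s > 0, closure (convexHull ℝ (T s)) ⊆ closure (convexHull ℝ E) := by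
  intro v hv
  rw [closure_eq_iInter_cthickening]
  refine Set.mem_iInter₂.2 fun δ hδ => ?_
  obtain ⟨s, hs, hTs⟩ := hT δ hδ
  exact closure_minimal (convexHull_min hTs ((convex_convexHull ℝ E).cthickening δ))
    isClosed_cthickening (Set.mem_iInter₂.1 hv s hs)

end Convex

section Periodic

variable {G : Type*} [Group G] {V : Type*} [NormedAddCommGroup V]
  {H : Subgroup G} {ρ : G → G → ℝ} {π₁ : G → V}

def IsLeftInvariantOn (H : Subgroup G) (ρ : G → G → ℝ) : Prop :=
  ∀ h ∈ H, ∀ x y : G, ρ (h * x) (h * y) = ρ x y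

theorem IsLeftInvariantOn.rho_mul_right (hinv : IsLeftInvariantOn H ρ) {h : G} (hh : h ∈ H)
    (x : G) : ρ h (h * x) = ρ 1 x := by
  simpa using hinv h hh 1 x

theorem IsLeftInvariantOn.rho_one_inv_mul (hinv : IsLeftInvariantOn H ρ) {h : G} (hh : h ∈ H)
    (x : G) : ρ 1 (h⁻¹ * x) = ρ h x := by
  simpa using (hinv h hh 1 (h⁻¹ * x)).symm

theorem IsLeftInvariantOn.rho_one_inv (hinv : IsLeftInvariantOn H ρ) (hρ : IsPseudoDist ρ)
    {h : G} (hh : h ∈ H) : ρ 1 h⁻¹ = ρ 1 h := by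
  rw [← mul_one h⁻¹, hinv.rho_one_inv_mul hh, hρ.symm]

theorem IsLeftInvariantOn.exists_near_of_mul_eq_univ (hinv : IsLeftInvariantOn H ρ)
    (hρ : IsPseudoDist ρ) (hhom : ∀ x y : G, π₁ (x * y) = π₁ x + π₁ y) {F : Set G}
    (hHF : (H : Set G) * F = Set.univ) {C M : ℝ} (hC : ∀ f ∈ F, ρ 1 f ≤ C)
    (hM : ∀ f ∈ F, ‖π₁ f‖ ≤ M) (x : G) :
    ∃ h ∈ H, ρ h x ≤ C ∧ ρ x h ≤ C ∧ ‖π₁ x - π₁ h‖ ≤ M := by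
  obtain ⟨h, hh, f, hf, rfl⟩ : x ∈ (H : Set G) * F := hHF ▸ Set.mem_univ x
  have hhx : ρ h (h * f) ≤ C := (hinv.rho_mul_right hh f).trans_le (hC f hf)
  exact ⟨h, hh, hhx, hρ.symm h _ ▸ hhx, by rw [hhom, add_sub_cancel_left]; exact hM f hf⟩

theorem IsLeftInvariantOn.rho_one_pow_le (hinv : IsLeftInvariantOn H ρ) (hρ : IsPseudoDist ρ)
    {h : G} (hh : h ∈ H) {n : ℕ} (hn : 0 < n) : ρ 1 (h ^ n) ≤ n * ρ 1 h := by
  induction n, hn using Nat.le_induction with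
  | base => simp
  | succ n _ ih =>
    have hstep : ρ (h ^ n) (h ^ (n + 1)) = ρ 1 h := by
      rw [pow_succ, hinv.rho_mul_right (pow_mem hh n)]
    push_cast
    linarith [hρ.triangle 1 (h ^ n) (h ^ (n + 1))]

theorem exists_subgroup_steps (hρ : IsPseudoDist ρ) (hinv : IsLeftInvariantOn H ρ)
    (hhom : ∀ x y : G, π₁ (x * y) = π₁ x + π₁ y) {C M : ℝ}
    (hnear : ∀ x, ∃ h ∈ H, ρ h x ≤ C ∧ ρ x h ≤ C ∧ ‖π₁ x - π₁ h‖ ≤ M)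
    {S : ℝ} (hS : 0 < S) {n : ℕ} {c : ℕ → G} (hc : ∀ i < n, ρ (c i) (c (i + 1)) ≤ S) :
    ∃ (m : ℕ) (g : ℕ → G), (∀ k, g k ∈ H) ∧ (∀ k, ρ 1 (g k) ≤ 2 * S + 2 * C) ∧
      ∑ k ∈ Finset.range m, ρ 1 (g k) ≤ ∑ i ∈ Finset.range n, ρ (c i) (c (i + 1)) + 2 * C * m ∧
      m * S ≤ ∑ i ∈ Finset.range n, ρ (c i) (c (i + 1)) + S ∧
      ‖π₁ (c n) - π₁ (c 0) - ∑ k ∈ Finset.range m, π₁ (g k)‖ ≤ 2 * M := by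
  choose h hH hhc hch hπ using fun j => hnear (c j)
  set P : ℕ → ℝ := fun j => ∑ i ∈ Finset.range j, ρ (c i) (c (i + 1))
  obtain ⟨m, φ, hφ, hφ0, hφm, hPφ, hm⟩ := exists_coarse_subdivision P hS (by simp [P])
    (fun j => Finset.sum_nonneg fun i _ => hρ.nonneg _ _)
    (fun j hj => by simp only [P, Finset.sum_range_succ]; linarith [hc j hj])
  have hstep (k : ℕ) : ρ 1 ((h (φ k))⁻¹ * h (φ (k + 1))) ≤ P (φ (k + 1)) - P (φ k) + 2 * C := by
    have hchain := hρ.le_add_sum_Ico_add c (hφ k.le_succ) (h (φ k)) (h (φ (k + 1)))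
    rw [Finset.sum_Ico_eq_sub _ (hφ k.le_succ)] at hchain
    rw [hinv.rho_one_inv_mul (hH _)]
    linarith [hhc (φ k), hch (φ (k + 1))]
  refine ⟨m, fun k => (h (φ k))⁻¹ * h (φ (k + 1)), fun k => mul_mem (inv_mem (hH _)) (hH _),
    fun k => by linarith [hstep k, hPφ k], ?_, hm, ?_⟩
  · calc ∑ k ∈ Finset.range m, ρ 1 ((h (φ k))⁻¹ * h (φ (k + 1)))
        ≤ ∑ k ∈ Finset.range m, (P (φ (k + 1)) - P (φ k) + 2 * C) :=
          Finset.sum_le_sum fun k _ => hstep k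
      _ = P n + 2 * C * m := by
          rw [Finset.sum_add_distrib, Finset.sum_range_sub (fun k => P (φ k)), hφm, hφ0]
          simp [P, mul_comm]
  · have htel : ∑ k ∈ Finset.range m, π₁ ((h (φ k))⁻¹ * h (φ (k + 1))) = π₁ (h n) - π₁ (h 0) := by
      simp only [hhom, map_inv_of_map_mul hhom, neg_add_eq_sub]
      rw [Finset.sum_range_sub (fun k => π₁ (h (φ k))), hφm, hφ0]
    rw [htel]
    calc ‖π₁ (c n) - π₁ (c 0) - (π₁ (h n) - π₁ (h 0))‖
        = ‖(π₁ (c n) - π₁ (h n)) - (π₁ (c 0) - π₁ (h 0))‖ := by congr 1; abel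
      _ ≤ M + M := (norm_sub_le _ _).trans (add_le_add (hπ n) (hπ 0))
      _ = 2 * M := by ring

theorem exists_lt_rho_one [TopologicalSpace G] [NoncompactSpace G] (hρ : IsPseudoDist ρ)
    (hproper : IsProperDist ρ) {C : ℝ} (hnear : ∀ x, ∃ h ∈ H, ρ h x ≤ C) (s : ℝ) :
    ∃ h ∈ H, s < ρ 1 h := by
  obtain ⟨x, hx⟩ : ∃ x, max (s + C) 1 < ρ 1 x := by
    by_contra! hall
    have hcompact := hproper (max (s + C) 1) (one_pos.trans_le (le_max_right _ _))
    rw [Set.eq_univ_of_forall (s := {y | ρ 1 y ≤ max (s + C) 1}) hall, closure_univ] at hcompact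
    exact noncompact_univ G hcompact
  obtain ⟨h, hh, hhx⟩ := hnear x
  exact ⟨h, hh, by linarith [hρ.triangle 1 h x, le_max_left (s + C) 1]⟩

theorem exists_norm_le_mul_add [TopologicalSpace G] (hρ : IsPseudoDist ρ)
    (hinv : IsLeftInvariantOn H ρ) (hhom : ∀ x y : G, π₁ (x * y) = π₁ x + π₁ y) {C M : ℝ}
    (hnear : ∀ x, ∃ h ∈ H, ρ h x ≤ C ∧ ρ x h ≤ C ∧ ‖π₁ x - π₁ h‖ ≤ M)
    (hproper : IsProperDist ρ) (hgeo : IsAsympGeodesic ρ) (hcont : Continuous π₁) :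
    ∃ A B : ℝ, 0 ≤ A ∧ ∀ x, ‖π₁ x‖ ≤ A * ρ 1 x + B := by
  obtain ⟨s, hs, hchain⟩ := hgeo 1 one_pos
  obtain ⟨h₁, -, hC, -⟩ := hnear 1
  have hball : 0 < 2 * s + 2 * C := by linarith [hρ.nonneg h₁ 1]
  obtain ⟨K, hK⟩ := (hproper _ hball).exists_bound_of_continuousOn hcont.continuousOn
  set K' := max K 0
  refine ⟨2 * K' / s, K' + 2 * M, by positivity, fun x => ?_⟩
  obtain ⟨n, c, hc0, hcn, hc, hL⟩ := hchain 1 x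
  obtain ⟨m, g, -, hg, -, hm, hπ⟩ := exists_subgroup_steps hρ hinv hhom hnear hs hc
  rw [hc0, hcn, map_one_of_map_mul hhom, sub_zero] at hπ
  have hsum : ‖∑ k ∈ Finset.range m, π₁ (g k)‖ ≤ m * K' := by
    refine (norm_sum_le _ _).trans ?_
    simpa using Finset.sum_le_sum fun k (_ : k ∈ Finset.range m) =>
      (hK _ (subset_closure (hg k))).trans (le_max_left K 0)
  have hmK : m * K' ≤ 2 * K' / s * ρ 1 x + K' := by
    have hms : (m : ℝ) ≤ 2 * ρ 1 x / s + 1 := by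
      rw [div_add_one hs.ne', le_div_iff₀ hs]
      linarith
    calc (m : ℝ) * K' ≤ (2 * ρ 1 x / s + 1) * K' := by gcongr
      _ = 2 * K' / s * ρ 1 x + K' := by ring
  linarith [norm_le_norm_sub_add (π₁ x) (∑ k ∈ Finset.range m, π₁ (g k))]

variable [NormedSpace ℝ V]

theorem IsLeftInvariantOn.norm_le_mul_of_mem (hinv : IsLeftInvariantOn H ρ) (hρ : IsPseudoDist ρ)
    (hhom : ∀ x y : G, π₁ (x * y) = π₁ x + π₁ y) {A B : ℝ} (hA : 0 ≤ A)
    (hlin : ∀ x, ‖π₁ x‖ ≤ A * ρ 1 x + B) {h : G} (hh : h ∈ H) : ‖π₁ h‖ ≤ A * ρ 1 h := by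
  refine le_of_forall_nat_mul_le_mul_add (b := B) fun n hn => ?_
  calc n * ‖π₁ h‖ = ‖π₁ (h ^ n)‖ := by
        rw [map_pow_of_map_mul hhom, RCLike.norm_nsmul ℝ, nsmul_eq_mul]
    _ ≤ A * ρ 1 (h ^ n) + B := hlin _
    _ ≤ A * (n * ρ 1 h) + B := by gcongr; exact hinv.rho_one_pow_le hρ hh hn
    _ = n * (A * ρ 1 h) + B := by ring

theorem eq_zero_of_forall_rho_one_pow_le (hhom : ∀ x y : G, π₁ (x * y) = π₁ x + π₁ y)
    {A B : ℝ} (hA : 0 ≤ A) (hlin : ∀ x, ‖π₁ x‖ ≤ A * ρ 1 x + B) {h : G} {s : ℝ}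
    (hpow : ∀ n : ℕ, 0 < n → ρ 1 (h ^ n) ≤ s) : π₁ h = 0 := by
  refine norm_le_zero_iff.1 <| le_of_forall_nat_mul_le_mul_add (b := A * s + B) fun n hn => ?_
  rw [mul_zero, zero_add, ← nsmul_eq_mul, ← RCLike.norm_nsmul ℝ, ← map_pow_of_map_mul hhom]
  exact (hlin _).trans (by gcongr; exact hpow n hn)

/-- The sets `E` and `E_s` of the theorem are the closed convex hulls of `subgroupSlopes H ρ π₁`
and `farSlopes ρ π₁ s`. -/
def subgroupSlopes (H : Subgroup G) (ρ : G → G → ℝ) (π₁ : G → V) : Set V :=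
  {w : V | ∃ h ∈ H, 0 < ρ 1 h ∧ w = (ρ 1 h)⁻¹ • π₁ h}

def farSlopes (ρ : G → G → ℝ) (π₁ : G → V) (s : ℝ) : Set V :=
  {w : V | ∃ x : G, s < ρ 1 x ∧ w = (ρ 1 x)⁻¹ • π₁ x}

theorem IsLeftInvariantOn.zero_mem_convexHull_farSlopes (hinv : IsLeftInvariantOn H ρ)
    (hρ : IsPseudoDist ρ) (hhom : ∀ x y : G, π₁ (x * y) = π₁ x + π₁ y) {h : G} (hh : h ∈ H)
    {s : ℝ} (hs : s < ρ 1 h) : (0 : V) ∈ convexHull ℝ (farSlopes ρ π₁ s) :=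
  zero_mem_convexHull_of_mem_of_neg_mem ⟨h, hs, rfl⟩
    ⟨h⁻¹, by rwa [hinv.rho_one_inv hρ hh], by
      rw [hinv.rho_one_inv hρ hh, map_inv_of_map_mul hhom, smul_neg]⟩

theorem IsLeftInvariantOn.zero_mem_convexHull_subgroupSlopes (hinv : IsLeftInvariantOn H ρ)
    (hρ : IsPseudoDist ρ) (hhom : ∀ x y : G, π₁ (x * y) = π₁ x + π₁ y) {h : G} (hh : h ∈ H)
    (hpos : 0 < ρ 1 h) : (0 : V) ∈ convexHull ℝ (subgroupSlopes H ρ π₁) :=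
  zero_mem_convexHull_of_mem_of_neg_mem ⟨h, hh, hpos, rfl⟩
    ⟨h⁻¹, inv_mem hh, by rwa [hinv.rho_one_inv hρ hh], by
      rw [hinv.rho_one_inv hρ hh, map_inv_of_map_mul hhom, smul_neg]⟩

theorem IsLeftInvariantOn.subgroupSlopes_subset_convexHull_farSlopes
    (hinv : IsLeftInvariantOn H ρ) (hρ : IsPseudoDist ρ)
    (hhom : ∀ x y : G, π₁ (x * y) = π₁ x + π₁ y) {A B : ℝ} (hA : 0 ≤ A)
    (hlin : ∀ x, ‖π₁ x‖ ≤ A * ρ 1 x + B) {s : ℝ} (hs : 0 < s)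
    (h0 : (0 : V) ∈ convexHull ℝ (farSlopes ρ π₁ s)) :
    subgroupSlopes H ρ π₁ ⊆ convexHull ℝ (farSlopes ρ π₁ s) := by
  rintro _ ⟨h, hh, hpos, rfl⟩
  by_cases hbdd : ∀ n : ℕ, 0 < n → ρ 1 (h ^ n) ≤ s
  · rw [eq_zero_of_forall_rho_one_pow_le hhom hA hlin hbdd, smul_zero]
    exact h0
  push Not at hbdd
  obtain ⟨n, hn, hfar⟩ := hbdd
  have hn' : (0 : ℝ) < n := Nat.cast_pos.2 hn
  have ht : ρ 1 (h ^ n) / (n * ρ 1 h) ∈ Set.Icc (0 : ℝ) 1 :=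
    ⟨div_nonneg (hρ.nonneg _ _) (by positivity),
      div_le_one_of_le₀ (hinv.rho_one_pow_le hρ hh hn) (by positivity)⟩
  convert (convex_convexHull ℝ _).smul_mem_of_zero_mem h0
    (subset_convexHull ℝ _ ⟨h ^ n, hfar, rfl⟩) ht using 1
  rw [map_pow_of_map_mul hhom, ← Nat.cast_smul_eq_nsmul ℝ, smul_smul, smul_smul]
  congr 1
  field_simp [(hs.trans hfar).ne']

/-- The `m ≤ 3 η ρ(1, x)` steps in `H` each cost `2 * C`, so their lengths add up to at most
`(1 + η (1 + 6 C)) ρ(1, x)`; the endpoints add the error `2 M / ρ(1, x) ≤ 2 M η`. -/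
theorem IsLeftInvariantOn.farSlopes_subset_cthickening_mul (hinv : IsLeftInvariantOn H ρ)
    (hρ : IsPseudoDist ρ) (hhom : ∀ x y : G, π₁ (x * y) = π₁ x + π₁ y) {C M : ℝ}
    (hnear : ∀ x, ∃ h ∈ H, ρ h x ≤ C ∧ ρ x h ≤ C ∧ ‖π₁ x - π₁ h‖ ≤ M)
    (hgeo : IsAsympGeodesic ρ) {A : ℝ} (hA : 0 ≤ A) (hlinH : ∀ h ∈ H, ‖π₁ h‖ ≤ A * ρ 1 h)
    (h0 : (0 : V) ∈ convexHull ℝ (subgroupSlopes H ρ π₁)) {η : ℝ} (hη : 0 < η) (hη1 : η ≤ 1) :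
    farSlopes ρ π₁ η⁻¹ ⊆
      cthickening ((A * (1 + 6 * C) + 2 * M) * η) (convexHull ℝ (subgroupSlopes H ρ π₁)) := by
  obtain ⟨s₀, hs₀, hchain⟩ := hgeo η hη
  obtain ⟨h₁, -, hC, -, hM⟩ := hnear 1
  have hC0 : 0 ≤ C := (hρ.nonneg _ _).trans hC
  have hM0 : 0 ≤ M := (norm_nonneg _).trans hM
  set S := max s₀ η⁻¹
  have hS : 0 < S := hs₀.trans_le (le_max_left _ _)
  rintro _ ⟨x, hx, rfl⟩
  set D := ρ 1 x
  have hD : 0 < D := (inv_pos.2 hη).trans hx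
  obtain ⟨n, c, hc0, hcn, hc, hL⟩ := hchain 1 x
  obtain ⟨m, g, hgH, -, hsum, hm, hπ⟩ :=
    exists_subgroup_steps hρ hinv hhom hnear hS fun i hi => (hc i hi).trans (le_max_left _ _)
  rw [hc0, hcn, map_one_of_map_mul hhom, sub_zero] at hπ
  have hmD : (m : ℝ) ≤ 3 * η * D := by
    have hηS : 1 ≤ η * S := (inv_le_iff_one_le_mul₀' hη).1 (le_max_right _ _)
    have hηD : 1 ≤ η * D := (inv_le_iff_one_le_mul₀' hη).1 hx.le
    refine le_of_mul_le_mul_right ?_ hS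
    nlinarith [mul_le_mul_of_nonneg_left hηS hD.le, mul_le_mul_of_nonneg_left hηD hS.le]
  obtain ⟨q, hq, hdist⟩ := (convex_convexHull ℝ _).exists_mem_norm_sum_sub_le h0 hA
    (by positivity : 0 ≤ η * (1 + 6 * C)) (t := Finset.range m) (r := fun k => ρ 1 (g k) / D)
    (y := fun k => D⁻¹ • π₁ (g k)) (fun k _ => div_nonneg (hρ.nonneg _ _) hD.le)
    (fun k _ => by
      rw [norm_smul, norm_inv, Real.norm_of_nonneg hD.le, mul_div_assoc', le_div_iff₀ hD,
        inv_mul_eq_div, div_mul_cancel₀ _ hD.ne']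
      exact hlinH _ (hgH k))
    (fun k _ hpos => subset_convexHull ℝ _ ⟨g k, hgH k, (div_pos_iff_of_pos_right hD).1 hpos, by
      rw [smul_smul, inv_div, div_mul_eq_mul_div, mul_inv_cancel₀ hD.ne', one_div]⟩)
    (by
      rw [← Finset.sum_div, div_le_iff₀ hD]
      nlinarith [mul_le_mul_of_nonneg_left hmD hC0])
  refine mem_cthickening_of_dist_le _ q _ _ hq ?_
  rw [dist_eq_norm]
  have hfirst : ‖D⁻¹ • π₁ x - ∑ k ∈ Finset.range m, D⁻¹ • π₁ (g k)‖ ≤ 2 * M * η := by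
    rw [← Finset.smul_sum, ← smul_sub, norm_smul, norm_inv, Real.norm_of_nonneg hD.le]
    calc D⁻¹ * ‖π₁ x - ∑ k ∈ Finset.range m, π₁ (g k)‖ ≤ η * (2 * M) :=
          mul_le_mul (inv_le_of_inv_le₀ hη hx.le) hπ (norm_nonneg _) hη.le
      _ = 2 * M * η := by ring
  linarith [norm_sub_le_norm_sub_add_norm_sub (D⁻¹ • π₁ x)
    (∑ k ∈ Finset.range m, D⁻¹ • π₁ (g k)) q]

theorem IsLeftInvariantOn.exists_farSlopes_subset_cthickening (hinv : IsLeftInvariantOn H ρ)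
    (hρ : IsPseudoDist ρ) (hhom : ∀ x y : G, π₁ (x * y) = π₁ x + π₁ y) {C M : ℝ}
    (hnear : ∀ x, ∃ h ∈ H, ρ h x ≤ C ∧ ρ x h ≤ C ∧ ‖π₁ x - π₁ h‖ ≤ M)
    (hgeo : IsAsympGeodesic ρ) {A : ℝ} (hA : 0 ≤ A) (hlinH : ∀ h ∈ H, ‖π₁ h‖ ≤ A * ρ 1 h)
    (h0 : (0 : V) ∈ convexHull ℝ (subgroupSlopes H ρ π₁)) {δ : ℝ} (hδ : 0 < δ) :
    ∃ s > 0, farSlopes ρ π₁ s ⊆ cthickening δ (convexHull ℝ (subgroupSlopes H ρ π₁)) := by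
  set K := A * (1 + 6 * C) + 2 * M
  set η := min 1 (δ / (|K| + 1))
  have hη : 0 < η := lt_min one_pos (by positivity)
  refine ⟨η⁻¹, inv_pos.2 hη, (hinv.farSlopes_subset_cthickening_mul hρ hhom hnear hgeo hA hlinH
    h0 hη (min_le_left _ _)).trans (cthickening_mono ?_ _)⟩
  calc K * η ≤ |K| * (δ / (|K| + 1)) :=
        mul_le_mul (le_abs_self K) (min_le_right _ _) hη.le (abs_nonneg K)
    _ ≤ δ := by
        rw [mul_div_assoc', div_le_iff₀ (by positivity)]
        nlinarith [abs_nonneg K]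

end Periodic

theorem limit_ball_eq_iInter_spheres_general
    {G : Type*} [Group G] [TopologicalSpace G]
    [NoncompactSpace G]
    {V : Type*} [NormedAddCommGroup V] [NormedSpace ℝ V]
    (H : Subgroup G)
    (hcocompact : ∃ F : Set G, IsCompact F ∧ (H : Set G) * F = Set.univ)
    (ρ : G → G → ℝ)
    (hρ : IsPseudoDist ρ ∧ IsLocallyBoundedDist ρ ∧ IsProperDist ρ ∧ IsAsympGeodesic ρ)
    (hρinv : ∀ h ∈ H, ∀ x y : G, ρ (h * x) (h * y) = ρ x y)
    (π₁ : G → V) (hcont : Continuous π₁)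
    (hhom : ∀ x y : G, π₁ (x * y) = π₁ x + π₁ y) :
    closure (convexHull ℝ
        {w : V | ∃ h ∈ H, 0 < ρ 1 h ∧ w = (ρ 1 h)⁻¹ • π₁ h}) =
      ⋂ (s : ℝ) (_ : 0 < s),
        closure (convexHull ℝ
          {w : V | ∃ x : G, s < ρ 1 x ∧ w = (ρ 1 x)⁻¹ • π₁ x}) := by
  obtain ⟨hpd, hlb, hproper, hgeo⟩ := hρ
  have hinv : IsLeftInvariantOn H ρ := hρinv
  obtain ⟨F, hF, hHF⟩ := hcocompact
  obtain ⟨C, hC⟩ := hlb _ ((isCompact_singleton (x := (1 : G))).prod hF)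
  obtain ⟨M, hM⟩ := hF.exists_bound_of_continuousOn hcont.continuousOn
  have hnear := hinv.exists_near_of_mul_eq_univ hpd hhom hHF (fun f hf => hC (1, f) ⟨rfl, hf⟩) hM
  obtain ⟨A, B, hA, hlin⟩ := exists_norm_le_mul_add hpd hinv hhom hnear hproper hgeo hcont
  have hlarge := exists_lt_rho_one hpd hproper fun x =>
    (hnear x).imp fun _ ⟨hh, hhx, _⟩ => ⟨hh, hhx⟩
  refine (Set.subset_iInter₂ fun s hs => closure_mono (convexHull_min ?_
    (convex_convexHull ℝ _))).antisymm (iInter_closure_convexHull_subset fun δ hδ => ?_)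
  · obtain ⟨h, hh, hfar⟩ := hlarge s
    exact hinv.subgroupSlopes_subset_convexHull_farSlopes hpd hhom hA hlin hs
      (hinv.zero_mem_convexHull_farSlopes hpd hhom hh hfar)
  · obtain ⟨h, hh, hpos⟩ := hlarge 0
    exact hinv.exists_farSlopes_subset_cthickening hpd hhom hnear hgeo hA
      (fun _ hg => hinv.norm_le_mul_of_mem hpd hhom hA hlin hg)
      (hinv.zero_mem_convexHull_subgroupSlopes hpd hhom hh hpos) hδ

/-- **The limit unit ball as an intersection over spheres** (Proposition 6.1). Let `G` be a
noncompact locally compact group, `H` a closed co-compact subgroup and `ρ` an `H`-periodic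
pseudodistance on `G`. Let `π₁ : G → V` be a continuous homomorphism to a finite-dimensional
real normed vector space. Let `E` be the closed convex hull of the points `π₁(h)/ρ(e,h)` for
`h ∈ H` with `ρ(e,h) > 0`, and for `s > 0` let `E_s` be the closed convex hull of the points
`π₁(x)/ρ(e,x)` for `x ∈ G` with `ρ(e,x) > s`. Then `E = ⋂_{s>0} E_s`. -/
theorem limit_ball_eq_iInter_spheres
    {G : Type*} [Group G] [TopologicalSpace G] [IsTopologicalGroup G] [LocallyCompactSpace G]
    [NoncompactSpace G]
    {V : Type*} [NormedAddCommGroup V] [NormedSpace ℝ V] [FiniteDimensional ℝ V]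
    (H : Subgroup G) (hclosed : IsClosed (H : Set G))
    (hcocompact : ∃ F : Set G, IsCompact F ∧ (H : Set G) * F = Set.univ)
    (ρ : G → G → ℝ)
    (hρ : IsPseudoDist ρ ∧ IsLocallyBoundedDist ρ ∧ IsProperDist ρ ∧ IsAsympGeodesic ρ)
    (hρinv : ∀ h ∈ H, ∀ x y : G, ρ (h * x) (h * y) = ρ x y)
    (π₁ : G → V) (hcont : Continuous π₁)
    (hhom : ∀ x y : G, π₁ (x * y) = π₁ x + π₁ y) :
    closure (convexHull ℝ
        {w : V | ∃ h ∈ H, 0 < ρ 1 h ∧ w = (ρ 1 h)⁻¹ • π₁ h}) =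
      ⋂ (s : ℝ) (_ : 0 < s),
        closure (convexHull ℝ
          {w : V | ∃ x : G, s < ρ 1 x ∧ w = (ρ 1 x)⁻¹ • π₁ x}) :=
  limit_ball_eq_iInter_spheres_general H hcocompact ρ hρ hρinv π₁ hcont hhom
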